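/- arXiv:2311.07214 — 2 statements merged into one kernel-verified Lean document; each statement's English description precedes it below -/
import Mathlib

section
/- Let W be an m×n integer matrix with all entries of absolute value at most Δ such that cone(W) is pointed, and set t = m·(2mΔ + 1)^m. Then for every b ∈ Λ(W) such that b = Wλ for some λ ∈ ℝ^n with λᵢ ≥ t for every coordinate i, one has b ∈ intcone(W). (In other words, the diagonal Frobenius number of W is at most m·(2mΔ + 1)^m.) -/
/-!
Replace `λ` by a point `μ ≥ t` with `Wμ = b` and at most `m` non-integral coordinates: an extreme
point of `{μ ∈ [t, ⌈λ⌉] : Wμ = b}` has linearly independent free columns. For `y ∈ ℤⁿ` with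
`Wy = b`, the vector `w = μ - y` lies in `ker W` and is integral off `m` coordinates. Cut each
`w i • Wᵢ` into `⌈|w i|⌉` pieces `±Wᵢ`, all whole except at most `m`; by the Steinitz lemma they
can be ordered so that all partial sums lie in `[-mΔ, mΔ]ᵐ`. If there are more than
`t = m(2mΔ+1)ᵐ` pieces, two partial sums agree in their ceilings and in the number of fractional
pieces passed (mod the total), so a nonempty set of whole pieces sums to `0`: an integral kernel
vector that can be peeled off `w` without overshooting. Repeating, `w = u + r` with `u ∈ ker_ℤ W`
and `|r| ≤ t`, and `x = y + u = μ - r ≥ 0`.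
-/

open Matrix Finset

open Filter Topology in
lemma eventually_add_smul_mem_Icc {ι : Type*} [Fintype ι] {lo hi y g : ι → ℝ}
    (hy : y ∈ Set.Icc lo hi) (hg : ∀ i, g i ≠ 0 → y i ∈ Set.Ioo (lo i) (hi i)) :
    ∀ᶠ ε in 𝓝 (0 : ℝ), y + ε • g ∈ Set.Icc lo hi := by
  simp only [← Set.pi_univ_Icc, Set.mem_univ_pi] at hy ⊢
  refine eventually_all.2 fun i => ?_
  by_cases hgi : g i = 0
  · simpa [hgi] using hy i
  have hlim : Tendsto (fun ε : ℝ => y i + ε * g i) (𝓝 0) (𝓝 (y i)) := by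
    simpa using (tendsto_id (x := 𝓝 (0 : ℝ))).mul_const (g i) |>.const_add (y i)
  filter_upwards [hlim.eventually (Ioo_mem_nhds (hg i hgi).1 (hg i hgi).2)] with ε hε
  exact Set.Ioo_subset_Icc_self hε

open Filter Topology in
theorem exists_mem_Icc_sum_smul_eq_card_Ioo_le {ι F : Type*} [Fintype ι]
    [AddCommGroup F] [Module ℝ F] [FiniteDimensional ℝ F] (f : ι → F) {lo hi x : ι → ℝ}
    (hx : x ∈ Set.Icc lo hi) :
    ∃ y ∈ Set.Icc lo hi, ∑ i, y i • f i = ∑ i, x i • f i ∧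
      #{i | y i ∈ Set.Ioo (lo i) (hi i)} ≤ Module.finrank ℝ F := by
  classical
  set L := Fintype.linearCombination ℝ f
  set K := Set.Icc lo hi ∩ {y | L y = L x}
  have hK : IsCompact K := by
    refine isCompact_Icc.inter_right ?_
    have : {y | L y = L x} = (· - x) ⁻¹' (LinearMap.ker L : Set (ι → ℝ)) := by
      ext y; simp [sub_eq_zero]
    rw [this]
    exact (Submodule.closed_of_finiteDimensional _).preimage (continuous_sub_right x)
  obtain ⟨y, hy⟩ := hK.extremePoints_nonempty ⟨x, hx, rfl⟩
  obtain ⟨⟨hyI, hyL : L y = L x⟩, hext⟩ := mem_extremePoints.1 hy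
  refine ⟨y, hyI, by simpa [L, Fintype.linearCombination_apply] using hyL, ?_⟩
  set O : Finset ι := {i | y i ∈ Set.Ioo (lo i) (hi i)}
  suffices hO : LinearIndepOn ℝ f (O : Set ι) by
    simpa using hO.fintype_card_le_finrank
  -- at an extreme point, moving along a relation among the free columns is impossible
  rw [linearIndepOn_finset_iff]
  intro c hc i hiO
  set g : ι → ℝ := fun j => if j ∈ O then c j else 0
  have hgO : ∀ j, g j ≠ 0 → y j ∈ Set.Ioo (lo j) (hi j) := fun j hj => by
    by_contra h
    exact hj (if_neg (by simpa [O] using h))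
  have hLg : L g = 0 := by
    rw [Fintype.linearCombination_apply, ← hc, Finset.sum_filter]
    simp [g, O, ite_smul]
  obtain ⟨ε, ⟨hε₁, hε₂⟩, hε⟩ := ((eventually_add_smul_mem_Icc hyI hgO).and
    (eventually_add_smul_mem_Icc (g := -g) hyI (by simpa using hgO))
    |>.filter_mono nhdsWithin_le_nhds |>.and self_mem_nhdsWithin).exists (f := 𝓝[≠] (0:ℝ))
  have hy' := hext (y - ε • g) ⟨by simpa [sub_eq_add_neg] using hε₂, by simp [hLg, hyL]⟩
    (y + ε • g) ⟨hε₁, by simp [hLg, hyL]⟩ (mem_openSegment_sub_add y (ε • g))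
  have hg : g = 0 := by
    simpa [show ε ≠ 0 from hε] using hy'.2
  simpa [g, hiO] using congrFun hg i

theorem Finset.exists_monotone_chain_of_erase {ι : Type*} [DecidableEq ι] {P : Finset ι → Prop}
    (hP : ∀ s, P s → s.Nonempty → ∃ a ∈ s, P (s.erase a)) (s : Finset ι) (hs : P s) :
    ∃ A : ℕ → Finset ι, Monotone A ∧ (∀ k, A k ⊆ s ∧ P (A k)) ∧ ∀ k ≤ #s, #(A k) = k := by
  induction h : #s generalizing s with
  | zero =>
    refine ⟨fun _ => s, monotone_const, fun _ => ⟨subset_rfl, hs⟩, fun k hk => ?_⟩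
    dsimp only
    omega
  | succ n ih =>
    obtain ⟨a, ha, hPa⟩ := hP s hs (card_pos.1 (by omega))
    obtain ⟨A, hAmono, hAP, hAcard⟩ := ih (s.erase a) hPa (by rw [card_erase_of_mem ha, h]; rfl)
    have hAs : ∀ k, A k ⊆ s := fun k => (hAP k).1.trans (erase_subset a s)
    refine ⟨fun k => if k ≤ n then A k else s, fun k l hkl => ?_, fun k => ?_, fun k hk => ?_⟩
    · dsimp only
      split_ifs with hk hl hl
      · exact hAmono hkl
      · exact hAs k
      · omega
      · exact subset_rfl
    · dsimp only
      split_ifs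
      exacts [⟨hAs k, (hAP k).2⟩, ⟨subset_rfl, hs⟩]
    · dsimp only
      split_ifs with hkn
      · exact hAcard k hkn
      · omega

section Steinitz

variable {ι E : Type*} [Fintype ι] [DecidableEq ι] [NormedAddCommGroup E] [NormedSpace ℝ E]
  {v : ι → E} {C : ℝ}

local notation "d" => Module.finrank ℝ E

/-- Weights in the Grinberg–Sevastyanov proof of the Steinitz lemma. -/
def IsSteinitzWeight (v : ι → E) (A : Finset ι) (lam : ι → ℝ) : Prop :=
  lam ∈ Set.Icc 0 (fun i => if i ∈ A then 1 else 0) ∧ ∑ i, lam i = #A - d ∧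
    ∑ i, lam i • v i = 0

lemma IsSteinitzWeight.norm_sum_le_finrank_mul (hv : ∀ i, ‖v i‖ ≤ C) {A : Finset ι} {lam : ι → ℝ}
    (hlam : IsSteinitzWeight v A lam) : ‖∑ i ∈ A, v i‖ ≤ d * C := by
  obtain ⟨⟨hlo, hhi⟩, hmass, hzero⟩ := hlam
  have hoff : ∀ i ∉ A, lam i = 0 := fun i hi =>
    le_antisymm (by simpa [hi] using hhi i) (hlo i)
  have hle : ∀ i ∈ A, lam i ≤ 1 := fun i hi => by simpa [hi] using hhi i
  have hoffA : ∀ g : ι → E, ∑ i ∈ A, lam i • g i = ∑ i, lam i • g i := fun g =>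
    sum_subset (subset_univ A) fun i _ hi => by simp [hoff i hi]
  calc ‖∑ i ∈ A, v i‖ = ‖∑ i ∈ A, (1 - lam i) • v i‖ := by
        simp_rw [sub_smul, one_smul, sum_sub_distrib, hoffA, hzero, sub_zero]
    _ ≤ ∑ i ∈ A, ‖(1 - lam i) • v i‖ := norm_sum_le _ _
    _ ≤ ∑ i ∈ A, (1 - lam i) * C := by
        refine sum_le_sum fun i hi => ?_
        rw [norm_smul, Real.norm_of_nonneg (by linarith [hle i hi])]
        exact mul_le_mul_of_nonneg_left (hv i) (by linarith [hle i hi])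
    _ = (#A - ∑ i, lam i) * C := by
        rw [← sum_mul, sum_sub_distrib, sum_const, nsmul_one,
          sum_subset (subset_univ A) fun i _ hi => hoff i hi]
    _ = d * C := by rw [hmass]; ring

lemma exists_mem_eq_zero_of_card_Ioo_le {A : Finset ι} {k : ℕ} {mu : ι → ℝ}
    (hmu : mu ∈ Set.Icc 0 (fun i => if i ∈ A then 1 else 0)) (hmass : ∑ i, mu i = #A - (k + 1))
    (hfree : #{i | mu i ∈ Set.Ioo 0 (if i ∈ A then 1 else 0)} ≤ k + 1) : ∃ j ∈ A, mu j = 0 := by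
  obtain ⟨hlo, hhi⟩ := hmu
  by_contra! hne
  set O : Finset ι := {i | mu i ∈ Set.Ioo 0 (if i ∈ A then 1 else 0)}
  have hOA : O ⊆ A := fun i hi => by
    by_contra h
    simp only [O, mem_filter, if_neg h] at hi
    exact (hi.2.1.trans hi.2.2).false
  have hone : ∀ i ∈ A, i ∉ O → mu i = 1 := fun i hi hiO => by
    refine le_antisymm (by simpa [hi] using hhi i) (not_lt.1 fun h => hiO ?_)
    simpa [O, hi, h] using (hlo i).lt_of_ne (hne i hi).symm
  -- the free coordinates carry a defect `∑ (1 - mu i) = k + 1`, each less than `1`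
  have hdefect : ∑ i ∈ O, (1 - mu i) = k + 1 := by
    rw [sum_subset hOA fun i hi hiO => by simp [hone i hi hiO], sum_sub_distrib,
      sum_subset (subset_univ A) fun i _ hi => le_antisymm (by simpa [hi] using hhi i) (hlo i),
      hmass]
    simp only [sum_const, nsmul_one]
    ring
  rcases O.eq_empty_or_nonempty with hO | hO
  · rw [hO, sum_empty] at hdefect
    linarith
  · have : ∑ i ∈ O, (1 - mu i) < #O := by
      simpa using sum_lt_sum_of_nonempty hO fun i hi =>
        sub_lt_self 1 ((hlo i).lt_of_ne (hne i (hOA hi)).symm)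
    have : (#O : ℝ) ≤ k + 1 := by exact_mod_cast hfree
    linarith

lemma IsSteinitzWeight.exists_erase [FiniteDimensional ℝ E] {A : Finset ι} {lam : ι → ℝ}
    (hlam : IsSteinitzWeight v A lam) (hA : d < #A) :
    ∃ j ∈ A, ∃ mu, IsSteinitzWeight v (A.erase j) mu := by
  obtain ⟨⟨hlo, hhi⟩, hmass, hzero⟩ := hlam
  have hpos : (0 : ℝ) < #A - d := by
    rw [sub_pos]; exact_mod_cast hA
  set r : ℝ := (#A - d - 1) / (#A - d)
  have hr : r ∈ Set.Icc (0 : ℝ) 1 := by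
    refine ⟨div_nonneg ?_ hpos.le, (div_le_one hpos).2 (by linarith)⟩
    have : (d : ℝ) + 1 ≤ #A := by exact_mod_cast hA
    linarith
  -- pass to a vertex of the polytope of weights of mass `#A - d - 1`
  obtain ⟨mu, hmubox, hmu, hfree⟩ := exists_mem_Icc_sum_smul_eq_card_Ioo_le
    (fun i => (v i, (1 : ℝ))) (x := r • lam)
    ⟨fun i => mul_nonneg hr.1 (hlo i), fun i => (mul_le_of_le_one_left (hlo i) hr.2).trans (hhi i)⟩
  have hmu' : ∑ i, mu i • v i = 0 ∧ ∑ i, mu i = #A - (d + 1) := by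
    have h1 := congrArg Prod.fst hmu
    have h2 := congrArg Prod.snd hmu
    simp only [Prod.fst_sum, Prod.snd_sum, Prod.smul_mk, smul_eq_mul, mul_one, Pi.smul_apply,
      mul_smul, ← smul_sum, hzero, smul_zero, ← mul_sum, hmass] at h1 h2
    exact ⟨h1, by rw [h2, div_mul_cancel₀ _ hpos.ne']; ring⟩
  rw [Module.finrank_prod, Module.finrank_self] at hfree
  obtain ⟨j, hjA, hj⟩ := exists_mem_eq_zero_of_card_Ioo_le hmubox hmu'.2 hfree
  refine ⟨j, hjA, mu, ⟨hmubox.1, fun i => ?_⟩, ?_, hmu'.1⟩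
  · by_cases hij : i = j
    · simp [hij, hj]
    · simpa [hij] using hmubox.2 i
  · rw [hmu'.2, card_erase_of_mem hjA, Nat.cast_sub (card_pos.2 ⟨j, hjA⟩)]
    ring

/-- The Steinitz lemma, with the Grinberg–Sevastyanov bound; `A k` is the set of the first `k`
terms of the ordering. -/
theorem exists_monotone_norm_sum_le [FiniteDimensional ℝ E] (hC : 0 ≤ C)
    (hv : ∀ i, ‖v i‖ ≤ C) (hv0 : ∑ i, v i = 0) :
    ∃ A : ℕ → Finset ι, Monotone A ∧ (∀ k ≤ Fintype.card ι, #(A k) = k) ∧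
      ∀ k, ‖∑ i ∈ A k, v i‖ ≤ d * C := by
  set P : Finset ι → Prop := fun A => #A ≤ d ∨ ∃ lam, IsSteinitzWeight v A lam
  have hstep : ∀ A, P A → A.Nonempty → ∃ j ∈ A, P (A.erase j) := by
    rintro A hA ⟨j, hj⟩
    by_cases hAd : #A ≤ d
    · exact ⟨j, hj, Or.inl ((card_erase_le).trans hAd)⟩
    · obtain ⟨lam, hlam⟩ := hA.resolve_left hAd
      obtain ⟨j, hj, mu, hmu⟩ := hlam.exists_erase (not_le.1 hAd)
      exact ⟨j, hj, Or.inr ⟨mu, hmu⟩⟩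
  have huniv : P univ := by
    by_cases hd : #(univ : Finset ι) ≤ d
    · exact Or.inl hd
    set N : ℝ := ((#(univ : Finset ι) : ℕ) : ℝ)
    have hdN : (d : ℝ) < N := Nat.cast_lt.2 (not_le.1 hd)
    have hN : 0 < N := (Nat.cast_nonneg d).trans_lt hdN
    refine Or.inr ⟨fun _ => (N - d) / N, ⟨fun i => ?_, fun i => ?_⟩, ?_, ?_⟩
    · exact div_nonneg (by linarith) hN.le
    · simpa using (div_le_one hN).2 (by linarith [(Nat.cast_nonneg d : (0 : ℝ) ≤ d)])
    · rw [sum_const, nsmul_eq_mul, mul_div_cancel₀ _ hN.ne']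
    · rw [← smul_sum, hv0, smul_zero]
  obtain ⟨A, hAmono, hAP, hAcard⟩ := exists_monotone_chain_of_erase hstep univ huniv
  refine ⟨A, hAmono, hAcard, fun k => ?_⟩
  rcases (hAP k).2 with hk | ⟨lam, hlam⟩
  · calc ‖∑ i ∈ A k, v i‖ ≤ ∑ i ∈ A k, ‖v i‖ := norm_sum_le _ _
      _ ≤ #(A k) * C := by simpa using sum_le_sum fun i (_ : i ∈ A k) => hv i
      _ ≤ d * C := by gcongr
  · exact hlam.norm_sum_le_finrank_mul hv

end Steinitz

lemma Nat.eq_or_eq_zero_and_eq_of_mod_eq {a b n : ℕ} (hab : a ≤ b) (hbn : b ≤ n)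
    (h : a % n = b % n) : a = b ∨ a = 0 ∧ b = n := by
  rcases Nat.eq_zero_or_pos (b - a) with hba | hba
  · omega
  have : b - a = n := Nat.eq_of_dvd_of_lt_two_mul hba.ne'
    (Nat.dvd_of_mod_eq_zero (Nat.sub_mod_eq_zero_of_mod_eq h.symm)) (by omega)
  omega

lemma eq_of_ceil_eq_of_sub_mem_range {x y : ℝ} (h : ⌈x⌉ = ⌈y⌉)
    (hxy : x - y ∈ (Int.castAddHom ℝ).range) : x = y := by
  obtain ⟨z, hz⟩ := hxy
  rw [Int.coe_castAddHom, eq_sub_iff_add_eq'] at hz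
  rw [← hz, Int.ceil_add_intCast, add_eq_left] at h
  simp [← hz, h]

lemma sum_eq_zero_of_ceil_eq {ι : Type*} {m : ℕ} {v : ι → Fin m → ℝ} {T : Finset ι}
    (hT : ∀ p ∈ T, ∀ j, v p j ∈ (Int.castAddHom ℝ).range) {x y : Fin m → ℝ}
    (hxy : ∀ j, ⌈x j⌉ = ⌈y j⌉) (hsum : ∑ p ∈ T, v p = x - y) : ∑ p ∈ T, v p = 0 := by
  have hx : x = y := funext fun j => eq_of_ceil_eq_of_sub_mem_range (hxy j) <| by
    rw [← Pi.sub_apply, ← hsum, Finset.sum_apply]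
    exact AddSubgroup.sum_mem _ fun p hp => hT p hp j
  rw [hsum, hx, sub_self]

lemma exists_lt_ceil_eq_of_mul_pow_lt {m R N f : ℕ} (S : ℕ → Fin m → ℝ) (hS : ∀ k, ‖S k‖ ≤ R)
    (c : ℕ → ℕ) (hc : ∀ k, c k < f) (hN : f * (2 * R + 1) ^ m < N) :
    ∃ a b, a < b ∧ b < N ∧ c a = c b ∧ ∀ j, ⌈S a j⌉ = ⌈S b j⌉ := by
  set key : ℕ → ℕ × (Fin m → ℤ) := fun k => (c k, fun j => ⌈S k j⌉)
  set classes := range f ×ˢ Fintype.piFinset fun _ : Fin m => Icc (-(R : ℤ)) R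
  have hkey : Set.MapsTo key (range N) classes := by
    intro k _
    simp only [classes, key, mem_coe, mem_product, mem_range, Fintype.mem_piFinset, mem_Icc]
    refine ⟨hc k, fun j => ?_⟩
    have hj := abs_le.1 ((Real.norm_eq_abs _).symm.trans_le
      ((norm_le_pi_norm (S k) j).trans (hS k)))
    exact ⟨Int.le_ceil_iff.2 (by push_cast; linarith), Int.ceil_le.2 (by push_cast; linarith)⟩
  have hclasses : #classes < #(range N) := by
    simp only [classes, card_product, card_range, Fintype.card_piFinset, Int.card_Icc, prod_const,
      card_univ, Fintype.card_fin]
    rwa [show (R + 1 - -(R : ℤ)) = ((2 * R + 1 : ℕ) : ℤ) by push_cast; ring, Int.toNat_natCast]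
  obtain ⟨a, ha, b, hb, hne, hab⟩ := exists_ne_map_eq_of_card_lt_of_maps_to hclasses hkey
  simp only [mem_range] at ha hb
  have hc := congrArg Prod.fst hab
  have hS := fun j => congrFun (congrArg Prod.snd hab) j
  rcases hne.lt_or_gt with hlt | hlt
  · exact ⟨a, b, hlt, hb, hc, hS⟩
  · exact ⟨b, a, hlt, ha, hc.symm, fun j => (hS j).symm⟩

/-- Pigeonhole on the partial sums of a Steinitz ordering, keyed by their ceilings and by the
number of pieces of `F` passed so far, taken mod `#F`. -/
theorem exists_nonempty_disjoint_sum_eq_zero {ι : Type*} [Fintype ι] [DecidableEq ι] {m Δ : ℕ}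
    (v : ι → Fin m → ℝ) (hv : ∀ p, ‖v p‖ ≤ Δ) (hv0 : ∑ p, v p = 0) {F : Finset ι} (hF : #F ≤ m)
    (hint : ∀ p ∉ F, ∀ j, v p j ∈ (Int.castAddHom ℝ).range)
    (hcard : m * (2 * m * Δ + 1) ^ m < Fintype.card ι) :
    ∃ T : Finset ι, T.Nonempty ∧ Disjoint T F ∧ ∑ p ∈ T, v p = 0 := by
  rcases Nat.eq_zero_or_pos #F with hF0 | hFpos
  · have hι : (univ : Finset ι).Nonempty := card_pos.1 (by rw [card_univ]; omega)
    exact ⟨univ, hι, by simp [card_eq_zero.1 hF0], by simpa using hv0⟩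
  obtain ⟨A, hAmono, hAcard, hAnorm⟩ := exists_monotone_norm_sum_le (Nat.cast_nonneg Δ) hv hv0
  rw [Module.finrank_fin_fun] at hAnorm
  set S : ℕ → Fin m → ℝ := fun k => ∑ p ∈ A k, v p
  obtain ⟨a, b, hlt, hb, hcnt_mod, hceil⟩ := exists_lt_ceil_eq_of_mul_pow_lt (R := m * Δ) S
    (fun k => by simpa using hAnorm k) (fun k => #(A k ∩ F) % #F) (fun k => Nat.mod_lt _ hFpos)
    ((Nat.mul_le_mul_right _ hF).trans_lt (by simpa [mul_assoc] using hcard))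
  have hAab : A a ⊆ A b := hAmono hlt.le
  have hcard_a : #(A a) = a := hAcard a (by omega)
  have hcard_b : #(A b) = b := hAcard b (by omega)
  have hD : ∑ p ∈ A b \ A a, v p = S b - S a := sum_sdiff_eq_sub hAab
  have hcnt : #(A a ∩ F) ≤ #(A b ∩ F) := card_le_card (inter_subset_inter_right hAab)
  rcases Nat.eq_or_eq_zero_and_eq_of_mod_eq hcnt (card_le_card inter_subset_right)
    hcnt_mod with heq | ⟨ha0, hbF⟩
  · -- no fractional piece between the two partial sums
    have hinter : A a ∩ F = A b ∩ F :=
      eq_of_subset_of_card_le (inter_subset_inter_right hAab) heq.ge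
    have hDF : Disjoint (A b \ A a) F := disjoint_left.2 fun p hp hpF =>
      (mem_sdiff.1 hp).2 (mem_inter.1 (hinter ▸ mem_inter.2 ⟨(mem_sdiff.1 hp).1, hpF⟩)).1
    refine ⟨A b \ A a, card_pos.1 ?_, hDF, sum_eq_zero_of_ceil_eq
      (fun p hp => hint p (disjoint_left.1 hDF hp)) (fun j => (hceil j).symm) hD⟩
    rw [card_sdiff_of_subset hAab]
    omega
  · -- all fractional pieces lie between the two partial sums: use the complement
    have hFb : F ⊆ A b := inter_eq_right.1 (eq_of_subset_of_card_le inter_subset_right hbF.ge)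
    have hFa : Disjoint (A a) F := disjoint_iff_inter_eq_empty.2 (card_eq_zero.1 ha0)
    have hFD : F ⊆ A b \ A a := fun p hp => mem_sdiff.2 ⟨hFb hp, disjoint_right.1 hFa hp⟩
    obtain ⟨p, hp⟩ : (A b)ᶜ.Nonempty := card_pos.1 (by rw [card_compl]; omega)
    have hDF : Disjoint (A b \ A a)ᶜ F := disjoint_left.2 fun q hq hqF => mem_compl.1 hq (hFD hqF)
    refine ⟨(A b \ A a)ᶜ, ⟨p, ?_⟩, hDF, sum_eq_zero_of_ceil_eq
      (fun p hp => hint p (disjoint_left.1 hDF hp)) hceil ?_⟩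
    · exact mem_compl.2 fun h => mem_compl.1 hp (mem_sdiff.1 h).1
    · have htotal := sum_compl_add_sum (A b \ A a) v
      rw [hv0, hD] at htotal
      rw [← sub_eq_zero, ← htotal]
      abel

def unitSplit (x : ℝ) (a : ℕ) : ℝ := min x (a + 1) - min x a

lemma unitSplit_mem_Icc (x : ℝ) (a : ℕ) : unitSplit x a ∈ Set.Icc 0 1 := by
  unfold unitSplit
  constructor
  · linarith [min_le_min_left x (by linarith : (a : ℝ) ≤ a + 1)]
  · rcases le_total x a with h | h
    · rw [min_eq_left h, min_eq_left (by linarith)]; norm_num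
    · rw [min_eq_right h]; linarith [min_le_right x (a + 1)]

lemma unitSplit_eq_one {x : ℝ} {a : ℕ} (h : a + 1 ≤ x) : unitSplit x a = 1 := by
  rw [unitSplit, min_eq_right h, min_eq_right (by linarith)]
  ring

lemma sum_unitSplit {x : ℝ} (hx : 0 ≤ x) : ∑ a : Fin ⌈x⌉₊, unitSplit x a = x := by
  rw [Fin.sum_univ_eq_sum_range (unitSplit x)]
  simp only [unitSplit, ← Nat.cast_succ]
  rw [sum_range_sub (fun a : ℕ => min x (a : ℝ)), min_eq_left (Nat.le_ceil x), Nat.cast_zero,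
    min_eq_right hx, sub_zero]

section Sign

variable {α : Type*} [CommRing α] [LinearOrder α] [IsStrictOrderedRing α]

lemma abs_sign_le_one (x : α) : |(SignType.sign x : α)| ≤ 1 := by
  rcases lt_trichotomy x 0 with h | h | h <;> simp [h]

lemma abs_sub_sign_mul {x c : α} (hc : 0 ≤ c) (hcx : c ≤ |x|) :
    |x - SignType.sign x * c| = |x| - c := by
  rcases lt_trichotomy x 0 with h | h | h
  · rw [abs_of_neg h] at hcx ⊢
    rw [sign_neg h, SignType.coe_neg_one, abs_of_nonpos (by linarith)]
    ring
  · subst h; simp at hcx; simp [le_antisymm hcx hc]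
  · rw [abs_of_pos h] at hcx ⊢
    rw [sign_pos h, SignType.coe_one, one_mul, abs_of_nonneg (by linarith)]

end Sign

lemma Matrix.map_intCast_mulVec {m ι : Type*} [Fintype ι] (W : Matrix m ι ℤ) (x : ι → ℤ) :
    W.map (Int.cast : ℤ → ℝ) *ᵥ (fun i => (x i : ℝ)) = fun j => ((W *ᵥ x) j : ℝ) := by
  ext j
  exact (RingHom.map_mulVec (Int.castRingHom ℝ) W x j).symm

section ColumnPieces

variable {m : ℕ} {ι : Type*} {W : Matrix (Fin m) ι ℤ} {w : ι → ℝ}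

noncomputable def Matrix.columnPiece (W : Matrix (Fin m) ι ℤ) (w : ι → ℝ) (p : Σ i, Fin ⌈|w i|⌉₊) :
    Fin m → ℝ :=
  fun j => unitSplit |w p.1| p.2 * SignType.sign (w p.1) * W j p.1

lemma Matrix.norm_columnPiece_le {Δ : ℕ} (hW : ∀ j i, |W j i| ≤ Δ) (p : Σ i, Fin ⌈|w i|⌉₊) :
    ‖W.columnPiece w p‖ ≤ Δ := by
  refine (pi_norm_le_iff_of_nonneg (Nat.cast_nonneg Δ)).2 fun j => ?_
  have hs := unitSplit_mem_Icc |w p.1| p.2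
  rw [Real.norm_eq_abs, columnPiece, abs_mul, abs_mul, abs_of_nonneg hs.1]
  calc unitSplit |w p.1| p.2 * |(SignType.sign (w p.1) : ℝ)| * |(W j p.1 : ℝ)|
      ≤ 1 * 1 * Δ := by
        gcongr
        exacts [hs.2, abs_sign_le_one _, by exact_mod_cast hW j p.1]
    _ = Δ := by ring

lemma Matrix.sum_columnPiece [Fintype ι] :
    ∑ p, W.columnPiece w p = W.map (Int.cast : ℤ → ℝ) *ᵥ w := by
  ext j
  simp only [Finset.sum_apply, columnPiece, Fintype.sum_sigma, ← sum_mul,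
    sum_unitSplit (abs_nonneg _), abs_mul_sign, mulVec, dotProduct, map_apply]
  exact sum_congr rfl fun i _ => mul_comm _ _

lemma Matrix.columnPiece_eq_of_le {p : Σ i, Fin ⌈|w i|⌉₊} (h : (p.2 : ℝ) + 1 ≤ |w p.1|) :
    W.columnPiece w p = fun j => (((SignType.sign (w p.1) : ℤ) * W j p.1 : ℤ) : ℝ) := by
  ext j
  simp [columnPiece, unitSplit_eq_one h]

lemma Matrix.mulVec_sign_mul_card_eq_sum_columnPiece [Fintype ι] [DecidableEq ι]
    {T : Finset (Σ i, Fin ⌈|w i|⌉₊)} (hT : ∀ p ∈ T, (p.2 : ℝ) + 1 ≤ |w p.1|) :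
    W.map (Int.cast : ℤ → ℝ) *ᵥ (fun i => ((SignType.sign (w i) * #{p ∈ T | p.1 = i} : ℤ) : ℝ)) =
      ∑ p ∈ T, W.columnPiece w p := by
  ext j
  simp only [Finset.sum_apply, mulVec, dotProduct, map_apply]
  rw [← sum_fiberwise T Sigma.fst]
  refine sum_congr rfl fun i _ => ?_
  have hfiber : ∀ p ∈ T.filter (·.1 = i),
      W.columnPiece w p j = ((SignType.sign (w i) * W j i : ℤ) : ℝ) := fun p hp => by
    obtain ⟨hpT, rfl⟩ := mem_filter.1 hp
    rw [W.columnPiece_eq_of_le (hT p hpT)]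
  rw [sum_congr rfl hfiber, sum_const, nsmul_eq_mul]
  push_cast
  ring

end ColumnPieces

lemma exists_card_le_forall_add_one_le_abs {ι : Type*} [Fintype ι] {w : ι → ℝ} {F : Finset ι}
    (hint : ∀ i ∉ F, w i ∈ (Int.castAddHom ℝ).range) :
    ∃ Fp : Finset (Σ i, Fin ⌈|w i|⌉₊), #Fp ≤ #F ∧ ∀ p ∉ Fp, (p.2 : ℝ) + 1 ≤ |w p.1| := by
  classical
  -- only the last piece of a non-integral coordinate can be fractional
  set Fp : Finset (Σ i, Fin ⌈|w i|⌉₊) := {p | p.1 ∈ F ∧ (p.2 : ℕ) = ⌊|w p.1|⌋₊}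
  refine ⟨Fp, ?_, fun p hp => ?_⟩
  · refine card_le_card_of_injOn Sigma.fst (fun p hp => (mem_filter.1 hp).2.1) ?_
    intro p hp q hq hpq
    simp only [Fp, mem_coe, mem_filter, mem_univ, true_and] at hp hq
    exact Sigma.ext hpq ((Fin.heq_ext_iff (by rw [hpq])).2 (by rw [hp.2, hq.2, hpq]))
  have hlt : (p.2 : ℕ) < ⌊|w p.1|⌋₊ := by
    have hp2 : (p.2 : ℕ) < ⌈|w p.1|⌉₊ := p.2.isLt
    by_cases hpF : p.1 ∈ F
    · have : (p.2 : ℕ) ≠ ⌊|w p.1|⌋₊ := fun h => hp (by simp [Fp, hpF, h])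
      have := Nat.ceil_le_floor_add_one |w p.1|
      omega
    · obtain ⟨z, hz⟩ := hint p.1 hpF
      have : ⌈|w p.1|⌉₊ = ⌊|w p.1|⌋₊ := by
        rw [← hz, Int.coe_castAddHom, ← Int.cast_abs, ← Int.natCast_natAbs, Int.cast_natCast,
          Nat.ceil_natCast, Nat.floor_natCast]
      omega
  exact_mod_cast (Nat.le_floor_iff (abs_nonneg _)).1 hlt

lemma card_filter_fst_le_abs {ι : Type*} [DecidableEq ι] {w : ι → ℝ}
    {T : Finset (Σ i, Fin ⌈|w i|⌉₊)} (hT : ∀ p ∈ T, (p.2 : ℝ) + 1 ≤ |w p.1|) (i : ι) :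
    (#{p ∈ T | p.1 = i} : ℝ) ≤ |w i| := by
  refine le_trans ?_ (Nat.floor_le (abs_nonneg (w i)))
  refine Nat.cast_le.2 ((card_le_card_of_injOn (t := range ⌊|w i|⌋₊)
    (fun p : Σ i, Fin ⌈|w i|⌉₊ => (p.2 : ℕ)) (fun p hp => ?_) ?_).trans (card_range _).le)
  · obtain ⟨hpT, rfl⟩ := mem_filter.1 hp
    have := hT p hpT
    simp only [coe_range, Set.mem_Iio]
    exact Nat.le_floor (by push_cast; linarith)
  · intro p hp q hq hpq
    obtain ⟨-, hpi⟩ := mem_filter.1 hp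
    obtain ⟨-, hqi⟩ := mem_filter.1 hq
    exact Sigma.ext (hpi.trans hqi.symm) ((Fin.heq_ext_iff (by rw [hpi, hqi])).2 hpq)

/-- `κ i` counts, with the sign of `w i`, the pieces of column `i` in a zero-sum set of whole
column pieces. -/
theorem Matrix.exists_mulVec_eq_zero_sum_ceil_lt {m Δ : ℕ} {ι : Type*} [Fintype ι] [DecidableEq ι]
    {W : Matrix (Fin m) ι ℤ} (hW : ∀ j i, |W j i| ≤ Δ) {F : Finset ι} (hF : #F ≤ m)
    {w : ι → ℝ} (hw : W.map (Int.cast : ℤ → ℝ) *ᵥ w = 0)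
    (hint : ∀ i ∉ F, w i ∈ (Int.castAddHom ℝ).range)
    (hbig : m * (2 * m * Δ + 1) ^ m < ∑ i, ⌈|w i|⌉₊) :
    ∃ κ : ι → ℤ, W *ᵥ κ = 0 ∧ ∑ i, ⌈|w i - κ i|⌉₊ < ∑ i, ⌈|w i|⌉₊ := by
  obtain ⟨Fp, hFp, hwhole⟩ := exists_card_le_forall_add_one_le_abs hint
  obtain ⟨T, hTne, hTF, hT⟩ := exists_nonempty_disjoint_sum_eq_zero (W.columnPiece w)
    (W.norm_columnPiece_le hW) (W.sum_columnPiece.trans hw) (hFp.trans hF)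
    (fun p hp j => by rw [W.columnPiece_eq_of_le (hwhole p hp)]; exact ⟨_, rfl⟩)
    (by simpa using hbig)
  have hTwhole : ∀ p ∈ T, (p.2 : ℝ) + 1 ≤ |w p.1| := fun p hp => hwhole p (disjoint_left.1 hTF hp)
  set c : ι → ℕ := fun i => #{p ∈ T | p.1 = i}
  set κ : ι → ℤ := fun i => SignType.sign (w i) * c i
  refine ⟨κ, ?_, ?_⟩
  · have hreal : W.map (Int.cast : ℤ → ℝ) *ᵥ (fun i => (κ i : ℝ)) = 0 := by
      rw [← hT, ← W.mulVec_sign_mul_card_eq_sum_columnPiece hTwhole]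
    rw [map_intCast_mulVec] at hreal
    funext j
    simpa using congrFun hreal j
  · have hc := card_filter_fst_le_abs hTwhole
    have hceil : ∀ i, ⌈|w i - κ i|⌉₊ = ⌈|w i|⌉₊ - c i := fun i => by
      rw [show ((κ i : ℤ) : ℝ) = SignType.sign (w i) * c i by simp [κ],
        abs_sub_sign_mul (Nat.cast_nonneg _) (hc i), Nat.ceil_sub_natCast]
    have hcle : ∀ i ∈ univ, c i ≤ ⌈|w i|⌉₊ := fun i _ =>
      Nat.cast_le.1 ((hc i).trans (Nat.le_ceil _))
    have hsumc : ∑ i, c i = #T := (card_eq_sum_card_fiberwise fun p _ => mem_univ p.1).symm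
    rw [sum_congr rfl fun i _ => hceil i, sum_tsub_distrib _ hcle, hsumc]
    have := sum_le_sum hcle
    have := hTne.card_pos
    omega

theorem Matrix.exists_mulVec_eq_zero_abs_sub_le {m Δ : ℕ} {ι : Type*} [Fintype ι] [DecidableEq ι]
    {W : Matrix (Fin m) ι ℤ} (hW : ∀ j i, |W j i| ≤ Δ) {F : Finset ι} (hF : #F ≤ m)
    {w : ι → ℝ} (hw : W.map (Int.cast : ℤ → ℝ) *ᵥ w = 0)
    (hint : ∀ i ∉ F, w i ∈ (Int.castAddHom ℝ).range) :
    ∃ u : ι → ℤ, W *ᵥ u = 0 ∧ ∀ i, |w i - u i| ≤ m * (2 * m * Δ + 1) ^ m := by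
  induction hN : ∑ i, ⌈|w i|⌉₊ using Nat.strong_induction_on generalizing w with
  | _ N ih =>
  by_cases hsmall : N ≤ m * (2 * m * Δ + 1) ^ m
  · refine ⟨0, mulVec_zero W, fun i => ?_⟩
    calc |w i - ((0 : ι → ℤ) i : ℝ)| = |w i| := by simp
      _ ≤ ⌈|w i|⌉₊ := Nat.le_ceil _
      _ ≤ m * (2 * m * Δ + 1) ^ m := by
        exact_mod_cast (single_le_sum (fun i _ => Nat.zero_le _) (mem_univ i)).trans
          (hN.trans_le hsmall)
  obtain ⟨κ, hκ, hlt⟩ := exists_mulVec_eq_zero_sum_ceil_lt hW hF hw hint (by omega)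
  obtain ⟨u, hu, hwu⟩ := ih _ (hN ▸ hlt) (w := fun i => w i - κ i)
    (by ext; simp [← Pi.sub_def, mulVec_sub, hw, map_intCast_mulVec, hκ])
    (fun i hi => sub_mem (hint i hi) ⟨κ i, rfl⟩) rfl
  refine ⟨κ + u, by rw [mulVec_add, hκ, hu, add_zero], fun i => ?_⟩
  simpa [sub_sub] using hwu i

theorem Matrix.exists_le_mulVec_eq_card_nonintegral_le {m ι : Type*} [Fintype m] [Fintype ι]
    (A : Matrix m ι ℝ) {lo : ι → ℤ} {x : ι → ℝ} (hx : ∀ i, (lo i : ℝ) ≤ x i) :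
    ∃ y : ι → ℝ, (∀ i, (lo i : ℝ) ≤ y i) ∧ A *ᵥ y = A *ᵥ x ∧
      ∃ F : Finset ι, #F ≤ Fintype.card m ∧ ∀ i ∉ F, y i ∈ (Int.castAddHom ℝ).range := by
  -- the box `[lo, ⌈x⌉]` has integral corners
  obtain ⟨y, ⟨hylo, hyhi⟩, hyA, hfree⟩ := exists_mem_Icc_sum_smul_eq_card_Ioo_le (fun i => Aᵀ i)
    (lo := fun i => (lo i : ℝ)) (hi := fun i => (⌈x i⌉ : ℝ)) ⟨hx, fun i => Int.le_ceil _⟩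
  refine ⟨y, hylo, by simpa [mulVec_eq_sum, op_smul_eq_smul] using hyA, _,
    by simpa using hfree, fun i hi => ?_⟩
  simp only [mem_filter, mem_univ, true_and, not_and_or, not_lt] at hi
  rcases hi with hi | hi
  · exact ⟨lo i, le_antisymm (hylo i) hi⟩
  · exact ⟨⌈x i⌉, le_antisymm hi (hyhi i)⟩

theorem diagonal_frobenius_bound_general (m n : ℕ) (Δ : ℤ)
    (W : Matrix (Fin m) (Fin n) ℤ) (hΔ : ∀ i j, |W i j| ≤ Δ)
    (b : Fin m → ℤ)
    -- `b ∈ Λ(W)`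
    (hlat : ∃ y : Fin n → ℤ, W.mulVec y = b)
    -- `b = Wλ` with `λᵢ ≥ m·(2mΔ+1)^m` for all `i`
    (lam : Fin n → ℝ)
    (hlam : ∀ i, (m : ℝ) * (2 * (m : ℝ) * (Δ : ℝ) + 1) ^ m ≤ lam i)
    (hWlam : (W.map (Int.cast : ℤ → ℝ)).mulVec lam = fun i => (b i : ℝ)) :
    -- then `b ∈ intcone(W)`
    ∃ x : Fin n → ℤ, 0 ≤ x ∧ W.mulVec x = b := by
  obtain ⟨y, rfl⟩ := hlat
  rcases lt_or_ge Δ 0 with hΔneg | hΔnonneg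
  · have hW : W = 0 := by
      ext i j
      exact absurd (hΔ i j) (by linarith [abs_nonneg (W i j)])
    exact ⟨0, le_rfl, by simp [hW]⟩
  lift Δ to ℕ using hΔnonneg
  set t : ℕ := m * (2 * m * Δ + 1) ^ m
  obtain ⟨μ, hμt, hμ, F, hF, hμint⟩ :=
    (W.map (Int.cast : ℤ → ℝ)).exists_le_mulVec_eq_card_nonintegral_le (lo := fun _ => (t : ℤ))
      (fun i => by simpa [t] using hlam i)
  obtain ⟨u, hu, hμu⟩ := W.exists_mulVec_eq_zero_abs_sub_le hΔ (by simpa using hF)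
    (w := μ - fun i => (y i : ℝ)) (by rw [mulVec_sub, hμ, hWlam, map_intCast_mulVec, sub_self])
    (fun i hi => sub_mem (hμint i hi) ⟨y i, rfl⟩)
  refine ⟨y + u, fun i => ?_, by rw [mulVec_add, hu, add_zero]⟩
  have hμi := hμt i
  have hclose := (abs_le.1 (hμu i)).2
  simp only [Pi.sub_apply, Int.cast_natCast] at hμi hclose
  exact_mod_cast (show (0 : ℝ) ≤ y i + u i by push_cast [t] at hμi hclose ⊢; linarith)

/-- Theorem on the diagonal Frobenius number: if `cone(W)` is pointed and
`b ∈ Λ(W)` can be written as `Wλ` with all coordinates of `λ` at least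
`m·(2mΔ+1)^m`, then `b ∈ intcone(W)`. -/
theorem diagonal_frobenius_bound (m n : ℕ) (Δ : ℤ)
    (W : Matrix (Fin m) (Fin n) ℤ) (hΔ : ∀ i j, |W i j| ≤ Δ)
    -- `cone(W)` is pointed: it contains no line, i.e. `cone(W) ∩ (−cone(W)) = {0}`
    (hpointed : ∀ v : Fin m → ℝ,
      (∃ x : Fin n → ℝ, 0 ≤ x ∧ (W.map (Int.cast : ℤ → ℝ)).mulVec x = v) →
      (∃ x : Fin n → ℝ, 0 ≤ x ∧ (W.map (Int.cast : ℤ → ℝ)).mulVec x = -v) →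
      v = 0)
    (b : Fin m → ℤ)
    -- `b ∈ Λ(W)`
    (hlat : ∃ y : Fin n → ℤ, W.mulVec y = b)
    -- `b = Wλ` with `λᵢ ≥ m·(2mΔ+1)^m` for all `i`
    (lam : Fin n → ℝ)
    (hlam : ∀ i, (m : ℝ) * (2 * (m : ℝ) * (Δ : ℝ) + 1) ^ m ≤ lam i)
    (hWlam : (W.map (Int.cast : ℤ → ℝ)).mulVec lam = fun i => (b i : ℝ)) :
    -- then `b ∈ intcone(W)`
    ∃ x : Fin n → ℤ, 0 ≤ x ∧ W.mulVec x = b :=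
  diagonal_frobenius_bound_general m n Δ W hΔ b hlat lam hlam hWlam
end

section
/- Let W be an m×n integer matrix with Λ(W) = ℤ^m and cone(W) pointed, and set t* = ((n − m)·√n / 2)·√(det(W·Wᵀ)). Then for every b ∈ ℤ^m such that b = Wλ for some λ ∈ ℝ^n with λᵢ ≥ t* for every coordinate i, one has b ∈ intcone(W). (In other words, the diagonal Frobenius number of W is at most t*.) -/
/-!
Choose `m` columns `σ` of `W` forming a nonsingular minor `A` (possible because `Λ(W) = ℤ^m`).
For every other column `j`, Cramer's rule gives an integer vector in the kernel of `W` that is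
`det A` at `j`, zero at the other non-chosen columns, and a maximal minor of `W` up to sign at
the chosen ones. A maximal minor squared is at most `det (W Wᵀ)` (splitting `W Wᵀ = P Pᵀ + Q` with
`Q` positive semidefinite gives `det (P Pᵀ + Q) ≥ det P ^ 2`), so all these entries are at most
`√det (W Wᵀ)` in absolute value. The `n - m` vectors span the real kernel of `W`, so expanding
`x₀ - λ` in them, for any integer solution `x₀` of `W x₀ = b`, and rounding the coefficients gives
an integer solution `z` with `|z - λ| ≤ (n - m) √det (W Wᵀ) / 2 ≤ t*` coordinatewise; hence `z ≥ 0`.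
-/

open Matrix Pointwise

lemma Function.Injective.update_of_notMem_range {α β : Type*} [DecidableEq α] {f : α → β}
    (hf : Function.Injective f) {b : β} (hb : b ∉ Set.range f) (a : α) :
    Function.Injective (Function.update f a b) := by
  intro x y hxy
  by_cases hx : x = a <;> by_cases hy : y = a
  · rw [hx, hy]
  · simp only [hx, hy, Function.update_self, ne_eq, not_false_eq_true, Function.update_of_ne] at hxy
    exact (hb ⟨y, hxy.symm⟩).elim
  · simp only [hx, hy, Function.update_self, ne_eq, not_false_eq_true, Function.update_of_ne] at hxy
    exact (hb ⟨x, hxy⟩).elim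
  · simp only [hx, hy, ne_eq, not_false_eq_true, Function.update_of_ne] at hxy
    exact hf hxy

lemma abs_sum_sub_round_mul_le {α K : Type*} [Field K] [LinearOrder K] [IsStrictOrderedRing K]
    [FloorRing K] (s : Finset α) (c g : α → K) {D : K} (hg : ∀ j ∈ s, |g j| ≤ D) :
    |∑ j ∈ s, (c j - round (c j)) * g j| ≤ s.card * D / 2 :=
  calc |∑ j ∈ s, (c j - round (c j)) * g j|
      ≤ ∑ j ∈ s, |c j - round (c j)| * |g j| := by
        simpa only [abs_mul] using Finset.abs_sum_le_sum_abs (fun j ↦ (c j - round (c j)) * g j) s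
    _ ≤ ∑ j ∈ s, 1 / 2 * D := Finset.sum_le_sum fun j hj ↦
        mul_le_mul (abs_sub_round _) (hg j hj) (abs_nonneg _) (by norm_num)
    _ = s.card * D / 2 := by
        rw [Finset.sum_const, nsmul_eq_mul]
        ring

namespace Matrix

variable {ι κ : Type*} [Fintype ι] [DecidableEq ι]

lemma PosSemidef.one_le_det_one_add {C : Matrix ι ι ℝ} (hC : C.PosSemidef) :
    1 ≤ (1 + C).det := by
  have hsum : (1 + C).IsHermitian := isHermitian_one.add hC.isHermitian
  rw [hsum.det_eq_prod_eigenvalues]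
  refine Finset.one_le_prod fun i _ ↦ ?_
  have hmem : hsum.eigenvalues i ∈ ({1} : Set ℝ) + spectrum ℝ C := by
    rw [spectrum.singleton_add_eq, map_one]
    exact hsum.eigenvalues_mem_spectrum_real i
  rw [hC.isHermitian.spectrum_real_eq_range_eigenvalues] at hmem
  obtain ⟨_, rfl, _, ⟨j, rfl⟩, hij⟩ := hmem
  simpa [← hij] using hC.eigenvalues_nonneg j

lemma sq_det_le_det_mul_transpose_add (P : Matrix ι ι ℝ) {Q : Matrix ι ι ℝ}
    (hQ : Q.PosSemidef) : P.det ^ 2 ≤ (P * Pᵀ + Q).det := by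
  have hPP : (P * Pᵀ).PosSemidef := by
    simpa using posSemidef_self_mul_conjTranspose P
  by_cases hP : P.det = 0
  · rw [hP, sq, zero_mul]
    exact (hPP.add hQ).det_nonneg
  have hU : IsUnit P.det := isUnit_iff_ne_zero.mpr hP
  have hfactor : P * Pᵀ + Q = P * (1 + P⁻¹ * Q * (P⁻¹)ᵀ) * Pᵀ := by
    rw [mul_add, add_mul, mul_one, ← Matrix.mul_assoc P, ← Matrix.mul_assoc P,
      mul_nonsing_inv _ hU, one_mul, Matrix.mul_assoc, ← transpose_mul, mul_nonsing_inv _ hU,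
      transpose_one, mul_one]
  have hC : (P⁻¹ * Q * (P⁻¹)ᵀ).PosSemidef := by
    simpa using hQ.mul_mul_conjTranspose_same P⁻¹
  rw [hfactor, det_mul, det_mul, det_transpose]
  nlinarith [hC.one_le_det_one_add, sq_nonneg P.det]

lemma sq_det_submatrix_le_det_mul_transpose [Fintype κ] (V : Matrix ι κ ℝ) {σ : ι → κ}
    (hσ : Function.Injective σ) : (V.submatrix id σ).det ^ 2 ≤ (V * Vᵀ).det := by
  classical
  set N := V.submatrix id (Subtype.val : {l // l ∉ Set.range σ} → κ)
  have hsplit : V * Vᵀ = V.submatrix id σ * (V.submatrix id σ)ᵀ + N * Nᵀ := by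
    ext i i'
    simp only [add_apply, mul_apply, transpose_apply, submatrix_apply, id, N]
    rw [← Fintype.sum_subtype_add_sum_subtype (· ∈ Set.range σ) fun l ↦ V i l * V i' l]
    congr 1
    convert (Fintype.sum_equiv (Equiv.ofInjective σ hσ) (fun s ↦ V i (σ s) * V i' (σ s))
      (fun l ↦ V i l * V i' l) fun _ ↦ rfl).symm
  rw [hsplit]
  exact sq_det_le_det_mul_transpose_add _ (by simpa using posSemidef_self_mul_conjTranspose N)

lemma abs_det_submatrix_le_sqrt_det_mul_transpose [Fintype κ] (W : Matrix ι κ ℤ) {σ : ι → κ}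
    (hσ : Function.Injective σ) : |((W.submatrix id σ).det : ℝ)| ≤ √((W * Wᵀ).det : ℝ) := by
  have hmap : (W * Wᵀ).map (fun x : ℤ ↦ (x : ℝ)) =
      W.map (fun x ↦ (x : ℝ)) * (W.map fun x ↦ (x : ℝ))ᵀ := by
    simpa [transpose_map] using Matrix.map_mul (f := Int.castRingHom ℝ) (L := W) (M := Wᵀ)
  rw [← Real.sqrt_sq_eq_abs, Int.cast_det, Int.cast_det, hmap]
  exact Real.sqrt_le_sqrt (sq_det_submatrix_le_det_mul_transpose (W.map Int.cast) hσ)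

section CramerKernel

variable {R : Type*} [CommRing R] [DecidableEq κ]

def cramerKernelVec (W : Matrix ι κ R) (σ : ι → κ) (j : κ) : κ → R :=
  Pi.single j (W.submatrix id σ).det -
    ∑ s, Pi.single (σ s) (cramer (W.submatrix id σ) (W.col j) s)

variable (W : Matrix ι κ R) {σ : ι → κ} {j : κ}

theorem mulVec_cramerKernelVec [Fintype κ] (σ : ι → κ) (j : κ) :
    W *ᵥ W.cramerKernelVec σ j = 0 := by
  ext i
  have hcramer := congrFun (mulVec_cramer (W.submatrix id σ) (W.col j)) i
  simp only [mulVec, dotProduct, submatrix_apply, id, Pi.smul_apply, smul_eq_mul] at hcramer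
  simp [cramerKernelVec, mulVec_sub, mulVec_sum, mulVec_single, hcramer, mul_comm]

theorem cramerKernelVec_apply_of_notMem_range {l : κ} (hl : l ∉ Set.range σ) :
    W.cramerKernelVec σ j l = (Pi.single j (W.submatrix id σ).det : κ → R) l := by
  have hne : ∀ s, l ≠ σ s := fun s h ↦ hl ⟨s, h.symm⟩
  simp [cramerKernelVec, Finset.sum_apply, Pi.single_apply, hne]

theorem cramerKernelVec_apply_comp (hσ : Function.Injective σ) (hj : j ∉ Set.range σ) (s : ι) :
    W.cramerKernelVec σ j (σ s) = -(W.submatrix id (Function.update σ s j)).det := by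
  have hupdate :
      (W.submatrix id σ).updateCol s (W.col j) = W.submatrix id (Function.update σ s j) := by
    ext i t
    rcases eq_or_ne t s with rfl | ht <;> simp [*]
  have hne : σ s ≠ j := fun h ↦ hj ⟨s, h⟩
  simp only [cramerKernelVec, Pi.sub_apply, Finset.sum_apply, Pi.single_apply, hσ.eq_iff, hne,
    Finset.sum_ite_eq, Finset.mem_univ, if_true, if_false, cramer_apply, hupdate, zero_sub]

theorem cramerKernelVec_map {S : Type*} [CommRing S] (f : R →+* S) (σ : ι → κ) (j : κ) :
    (W.map f).cramerKernelVec σ j = f ∘ W.cramerKernelVec σ j := by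
  ext l
  simp only [cramerKernelVec, Function.comp_apply, Pi.sub_apply, Finset.sum_apply,
    Pi.single_apply, cramer_apply, RingHom.map_det, apply_ite f, map_sub, map_sum, map_zero,
    RingHom.mapMatrix_apply, submatrix_map, map_updateCol]
  rfl

theorem abs_cramerKernelVec_le [LinearOrder R] [IsStrictOrderedRing R] {D : R}
    (hD : ∀ τ : ι → κ, Function.Injective τ → |(W.submatrix id τ).det| ≤ D)
    (hσ : Function.Injective σ) (hj : j ∉ Set.range σ) (l : κ) :
    |W.cramerKernelVec σ j l| ≤ D := by
  by_cases hl : l ∈ Set.range σ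
  · obtain ⟨s, rfl⟩ := hl
    rw [cramerKernelVec_apply_comp W hσ hj, abs_neg]
    exact hD _ (hσ.update_of_notMem_range hj s)
  · rw [cramerKernelVec_apply_of_notMem_range W hl, Pi.single_apply]
    split_ifs
    · exact hD σ hσ
    · exact abs_zero.trans_le ((abs_nonneg _).trans (hD σ hσ))

theorem eq_zero_of_mulVec_eq_zero_of_support_subset [Fintype κ] [NoZeroDivisors R]
    (hσ : Function.Injective σ) (hdet : (W.submatrix id σ).det ≠ 0) {y : κ → R}
    (hy : W *ᵥ y = 0) (hsupp : Function.support y ⊆ Set.range σ) : y = 0 := by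
  have hcomp : W.submatrix id σ *ᵥ (y ∘ σ) = 0 := by
    rw [← hy]
    ext i
    exact Fintype.sum_of_injective σ hσ _ _
      (fun l hl ↦ by simp [Function.notMem_support.mp (mt (@hsupp l) hl)]) fun _ ↦ rfl
  have hzero := eq_zero_of_mulVec_eq_zero hdet hcomp
  ext l
  by_cases hl : l ∈ Set.range σ
  · obtain ⟨s, rfl⟩ := hl
    exact congrFun hzero s
  · exact Function.notMem_support.mp (mt (@hsupp l) hl)

theorem eq_sum_cramerKernelVec_of_mulVec_eq_zero {K : Type*} [Field K] [Fintype κ]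
    (V : Matrix ι κ K) (hσ : Function.Injective σ) (hdet : (V.submatrix id σ).det ≠ 0)
    {y : κ → K} (hy : V *ᵥ y = 0) :
    y = ∑ j ∈ (Finset.univ.image σ)ᶜ, (y j / (V.submatrix id σ).det) • V.cramerKernelVec σ j := by
  rw [← sub_eq_zero]
  refine V.eq_zero_of_mulVec_eq_zero_of_support_subset hσ hdet ?_ fun l hl ↦ ?_
  · simp [mulVec_sub, mulVec_sum, mulVec_smul, mulVec_cramerKernelVec, hy]
  · by_contra hl'
    refine hl ?_
    have hl'' : l ∈ (Finset.univ.image σ)ᶜ := by simpa using hl'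
    simp [Finset.sum_apply, cramerKernelVec_apply_of_notMem_range V hl', Pi.single_apply, hl'',
      hdet]

end CramerKernel

theorem exists_injective_det_submatrix_ne_zero {K : Type*} [Field K] [Fintype κ]
    (V : Matrix ι κ K) (hV : Submodule.span K (Set.range V.col) = ⊤) :
    ∃ σ : ι → κ, Function.Injective σ ∧ (V.submatrix id σ).det ≠ 0 := by
  obtain ⟨κ', a, ha, hspan, hli⟩ := exists_linearIndependent' K V.col
  rw [hV] at hspan
  have : Finite κ' := Finite.of_injective a ha
  let _ : Fintype κ' := Fintype.ofFinite κ'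
  have hcard : Fintype.card ι = Fintype.card κ' := by
    rw [← Module.finrank_fintype_fun_eq_card K,
      Module.finrank_eq_card_basis (Module.Basis.mk hli hspan.ge)]
  let e : ι ≃ κ' := Fintype.equivOfCardEq hcard
  refine ⟨a ∘ e, ha.comp e.injective, ?_⟩
  have hunit : IsUnit (V.submatrix id (a ∘ e)) :=
    linearIndependent_cols_iff_isUnit.mp (hli.comp e e.injective)
  exact ((isUnit_iff_isUnit_det _).mp hunit).ne_zero

theorem exists_injective_det_submatrix_ne_zero_of_surjective [Fintype κ] (W : Matrix ι κ ℤ)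
    (hW : Function.Surjective W.mulVec) :
    ∃ σ : ι → κ, Function.Injective σ ∧ (W.submatrix id σ).det ≠ 0 := by
  have hspan : Submodule.span ℚ (Set.range (W.map (Int.cast : ℤ → ℚ)).col) = ⊤ := by
    rw [eq_top_iff, ← (Pi.basisFun ℚ ι).span_eq, Submodule.span_le, ← range_mulVecLin]
    rintro _ ⟨i, rfl⟩
    obtain ⟨x, hx⟩ := hW (Pi.single i 1)
    refine ⟨Int.cast ∘ x, funext fun k ↦ ?_⟩
    simpa [hx, Pi.single_apply, apply_ite] using ((Int.castRingHom ℚ).map_mulVec W x k).symm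
  obtain ⟨σ, hσ, hdet⟩ := exists_injective_det_submatrix_ne_zero _ hspan
  refine ⟨σ, hσ, fun h ↦ hdet ?_⟩
  rw [submatrix_map, ← Int.cast_det, h, Int.cast_zero]

variable [DecidableEq κ]

theorem exists_mulVec_eq_abs_sub_le {K : Type*} [Field K] [LinearOrder K] [IsStrictOrderedRing K]
    [FloorRing K] [Fintype κ] (W : Matrix ι κ ℤ) {σ : ι → κ} (hσ : Function.Injective σ)
    (hdet : (W.submatrix id σ).det ≠ 0) {D : K}
    (hD : ∀ τ : ι → κ, Function.Injective τ → |((W.submatrix id τ).det : K)| ≤ D)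
    {b : ι → ℤ} (hb : ∃ x, W *ᵥ x = b) {lam : κ → K}
    (hlam : W.map (Int.cast : ℤ → K) *ᵥ lam = fun i ↦ (b i : K)) :
    ∃ z : κ → ℤ, W *ᵥ z = b ∧
      ∀ l, |(z l : K) - lam l| ≤ (Fintype.card κ - Fintype.card ι) * D / 2 := by
  obtain ⟨x₀, rfl⟩ := hb
  set V := W.map (Int.cast : ℤ → K)
  set T := (Finset.univ.image σ)ᶜ
  have hdetV : (V.submatrix id σ).det ≠ 0 := by
    rw [submatrix_map, ← Int.cast_det]
    exact_mod_cast hdet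
  have hcast : ∀ j, V.cramerKernelVec σ j = Int.cast ∘ W.cramerKernelVec σ j :=
    cramerKernelVec_map W (Int.castRingHom K) σ
  set c : κ → K := fun j ↦ ((x₀ j : K) - lam j) / (V.submatrix id σ).det
  have hdecomp := V.eq_sum_cramerKernelVec_of_mulVec_eq_zero hσ hdetV
    (y := Int.cast ∘ x₀ - lam) (by
      ext i
      rw [mulVec_sub, Pi.sub_apply, hlam, Pi.zero_apply, sub_eq_zero]
      simpa using ((Int.castRingHom K).map_mulVec W x₀ i).symm)
  refine ⟨x₀ - ∑ j ∈ T, round (c j) • W.cramerKernelVec σ j, ?_, fun l ↦ ?_⟩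
  · simp only [mulVec_sub, mulVec_sum, mulVec_smul, mulVec_cramerKernelVec, smul_zero,
      Finset.sum_const_zero, sub_zero]
  have hsub : (((x₀ - ∑ j ∈ T, round (c j) • W.cramerKernelVec σ j) l : ℤ) : K) - lam l =
      ∑ j ∈ T, (c j - round (c j)) * (W.cramerKernelVec σ j l : K) := by
    have h := congrFun hdecomp l
    simp only [Pi.sub_apply, Finset.sum_apply, Pi.smul_apply, smul_eq_mul, hcast,
      Function.comp_apply] at h
    simp only [Pi.sub_apply, Finset.sum_apply, Pi.smul_apply, smul_eq_mul, Int.cast_sub,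
      Int.cast_sum, Int.cast_mul, sub_mul, Finset.sum_sub_distrib]
    rw [sub_right_comm, h]
  have hentry : ∀ j ∈ T, |(W.cramerKernelVec σ j l : K)| ≤ D := fun j hj ↦ by
    have hj' : j ∉ Set.range σ := by simpa [T] using hj
    simpa [hcast] using V.abs_cramerKernelVec_le (fun τ hτ ↦ by
      rw [submatrix_map, ← Int.cast_det]; exact hD τ hτ) hσ hj' l
  have hcard : (T.card : K) = Fintype.card κ - Fintype.card ι := by
    rw [Finset.card_compl, Finset.card_image_of_injective _ hσ, Finset.card_univ,
      Nat.cast_sub (Fintype.card_le_of_injective σ hσ)]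
  rw [hsub, ← hcard]
  exact abs_sum_sub_round_mul_le T c _ hentry

end Matrix

theorem aliev_henk_diagonal_frobenius_general (m n : ℕ)
    (W : Matrix (Fin m) (Fin n) ℤ)
    -- `Λ(W) = ℤ^m`
    (hlat : ∀ z : Fin m → ℤ, ∃ x : Fin n → ℤ, W.mulVec x = z)
    (b : Fin m → ℤ)
    (lam : Fin n → ℝ)
    -- all coordinates of `λ` are at least `t* = ((n−m)√n/2)·√(det(WWᵀ))`
    (hlam : ∀ i,
      ((n : ℝ) - (m : ℝ)) * Real.sqrt (n : ℝ) / 2 *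
        Real.sqrt (((W * Wᵀ).det : ℝ)) ≤ lam i)
    (hWlam : (W.map (Int.cast : ℤ → ℝ)).mulVec lam = fun i => (b i : ℝ)) :
    -- then `b ∈ intcone(W)`
    ∃ x : Fin n → ℤ, 0 ≤ x ∧ W.mulVec x = b := by
  obtain ⟨σ, hσ, hdet⟩ := W.exists_injective_det_submatrix_ne_zero_of_surjective hlat
  obtain ⟨z, hz, hclose⟩ := W.exists_mulVec_eq_abs_sub_le hσ hdet
    (fun _ hτ ↦ W.abs_det_submatrix_le_sqrt_det_mul_transpose hτ) (hlat b) hWlam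
  refine ⟨z, fun l ↦ ?_, hz⟩
  set D := √((W * Wᵀ).det : ℝ)
  have hmn : m ≤ n := by simpa using Fintype.card_le_of_injective σ hσ
  have hslack : ((n : ℝ) - m) * D / 2 ≤ ((n : ℝ) - m) * √(n : ℝ) / 2 * D := by
    rcases hmn.eq_or_lt with rfl | hlt
    · simp
    have hn : 1 ≤ √(n : ℝ) := Real.one_le_sqrt.mpr (Nat.one_le_cast.mpr (Nat.one_le_of_lt hlt))
    have hnm : (0 : ℝ) ≤ (n : ℝ) - m := sub_nonneg.mpr (by exact_mod_cast hmn)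
    nlinarith [mul_nonneg hnm (Real.sqrt_nonneg ((W * Wᵀ).det : ℝ))]
  have hzl := (abs_le.mp (hclose l)).1
  simp only [Fintype.card_fin] at hzl
  exact_mod_cast (by linarith [hlam l] : (0 : ℝ) ≤ z l)

/-- Theorem of Aliev and Henk: if `Λ(W) = ℤ^m` and `cone(W)` is pointed, then the
diagonal Frobenius number of `W` is at most `((n−m)√n/2)·√(det(WWᵀ))`: every
`b ∈ ℤ^m` of the form `Wλ` with all coordinates of `λ` at least this bound lies in
`intcone(W)`. -/
theorem aliev_henk_diagonal_frobenius (m n : ℕ)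
    (W : Matrix (Fin m) (Fin n) ℤ)
    -- `Λ(W) = ℤ^m`
    (hlat : ∀ z : Fin m → ℤ, ∃ x : Fin n → ℤ, W.mulVec x = z)
    -- `cone(W)` is pointed
    (hpointed : ∀ v : Fin m → ℝ,
      (∃ x : Fin n → ℝ, 0 ≤ x ∧ (W.map (Int.cast : ℤ → ℝ)).mulVec x = v) →
      (∃ x : Fin n → ℝ, 0 ≤ x ∧ (W.map (Int.cast : ℤ → ℝ)).mulVec x = -v) →
      v = 0)
    (b : Fin m → ℤ)
    (lam : Fin n → ℝ)
    -- all coordinates of `λ` are at least `t* = ((n−m)√n/2)·√(det(WWᵀ))`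
    (hlam : ∀ i,
      ((n : ℝ) - (m : ℝ)) * Real.sqrt (n : ℝ) / 2 *
        Real.sqrt (((W * Wᵀ).det : ℝ)) ≤ lam i)
    (hWlam : (W.map (Int.cast : ℤ → ℝ)).mulVec lam = fun i => (b i : ℝ)) :
    -- then `b ∈ intcone(W)`
    ∃ x : Fin n → ℤ, 0 ≤ x ∧ W.mulVec x = b :=
  aliev_henk_diagonal_frobenius_general m n W hlat b lam hlam hWlam
end
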